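/- For every s in the octahedron O there exists an invariant, ergodic Borel probability measure μ on Ω with mean current s(μ) = s. -/

import Mathlib

open MeasureTheory Filter

namespace Dimers

/-- Vertices of the grid graph on `ℤ³`. -/
abbrev V : Type := Fin 3 → ℤ

/-- The `i`-th standard unit vector of `ℤ³`. -/
def unitVec (i : Fin 3) : V := fun j => if j = i then 1 else 0

/-- Grid adjacency: two vertices are adjacent iff they differ by a standard unit vector. -/
def Adj (x y : V) : Prop := ∃ i : Fin 3, y = x + unitVec i ∨ x = y + unitVec i

/-- A vertex is even if its coordinate sum is even. -/
def IsEven (x : V) : Prop := (x 0 + x 1 + x 2) % 2 = 0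

instance : DecidablePred IsEven := fun x =>
  inferInstanceAs (Decidable ((x 0 + x 1 + x 2) % 2 = 0))

/-- A dimer tiling (perfect matching) of `ℤ³`, encoded by the involution sending each vertex
to the vertex it is matched with. -/
def IsTiling (m : V → V) : Prop := (∀ x, Adj x (m x)) ∧ ∀ x, m (m x) = x

/-- `Omega` is the space of dimer tilings of `ℤ³`. -/
abbrev Omega : Type := {m : V → V // IsTiling m}

theorem isTiling_translate {m : V → V} (h : IsTiling m) (v : V) :
    IsTiling fun x => m (x - v) + v := by
  obtain ⟨h1, h2⟩ := h
  constructor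
  · intro x
    show Adj x (m (x - v) + v)
    obtain ⟨i, hi | hi⟩ := h1 (x - v)
    · exact ⟨i, Or.inl (by rw [hi]; abel)⟩
    · refine ⟨i, Or.inr ?_⟩
      rw [sub_eq_iff_eq_add] at hi
      exact hi.trans (by abel)
  · intro x
    show m (m (x - v) + v - v) + v = x
    have h3 : m (x - v) + v - v = m (x - v) := by abel
    rw [h3, h2]
    abel

/-- Translation of a tiling by the vector `v`. -/
def translate (v : V) (τ : Omega) : Omega :=
  ⟨fun x => τ.1 (x - v) + v, isTiling_translate τ.2 v⟩

/-- A measure on `Omega` is invariant if it is preserved by translation by every even vector. -/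
def Invariant (μ : Measure Omega) : Prop :=
  ∀ v : V, IsEven v → Measure.map (translate v) μ = μ

/-- An invariant measure is ergodic if every Borel set invariant under all even translations
has measure `0` or `1`. -/
def IsErgodicMeasure (μ : Measure Omega) : Prop :=
  Invariant μ ∧ ∀ A : Set Omega, MeasurableSet A →
    (∀ v : V, IsEven v → translate v ⁻¹' A = A) → μ A = 0 ∨ μ A = 1

/-- The mean current of a measure on `Omega`: the `i`-th coordinate is
`μ{τ : e_i ∈ τ} − μ{τ : −e_i ∈ τ}`. -/
noncomputable def meanCurrent (μ : Measure Omega) : Fin 3 → ℝ := fun i =>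
  (μ {τ : Omega | τ.1 0 = unitVec i}).toReal - (μ {τ : Omega | τ.1 0 = -unitVec i}).toReal

/-- The mean-current octahedron `O`. -/
def Oct : Set (Fin 3 → ℝ) := {s | |s 0| + |s 1| + |s 2| ≤ 1}

/-- The Shannon entropy `H_Λ(μ)` of the restriction of `μ` to the finite window `Λ`
(the restriction of a tiling to `Λ` records the partner of every vertex of `Λ`, i.e. all
edges with at least one endpoint in `Λ`). -/
noncomputable def boxEntropy (Λ : Finset V) (μ : Measure Omega) : ℝ :=
  ∑' σ : (↥Λ → V), Real.negMulLog (μ {τ : Omega | ∀ x : ↥Λ, τ.1 x.1 = σ x}).toReal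

/-- The cube `Λ_n = ([-n,n] ∩ ℤ)³`. -/
noncomputable def cube (n : ℕ) : Finset V := Fintype.piFinset fun _ : Fin 3 => Finset.Icc (-(n : ℤ)) (n : ℤ)

/-- The specific entropy (entropy per site) of a measure on `Omega`. -/
noncomputable def specificEntropy (μ : Measure Omega) : ℝ :=
  limsup (fun n : ℕ => boxEntropy (cube n) μ / ((cube n).card : ℝ)) atTop

/-- The mean-current entropy function `ent`. -/
noncomputable def ent (s : Fin 3 → ℝ) : ℝ :=
  sSup {h : ℝ | ∃ μ : Measure Omega, IsProbabilityMeasure μ ∧ Invariant μ ∧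
    meanCurrent μ = s ∧ specificEntropy μ = h}

/-- The uniform Gibbs condition in the finite window `Λ`: any two boundary-compatible
configurations (tilings whose symmetric difference consists of edges with both endpoints
in `Λ`) give cylinder sets of equal measure. -/
def GibbsCond (μ : Measure Omega) (Λ : Finset V) : Prop :=
  ∀ τ τ' : Omega,
    (∀ x : V, τ.1 x ≠ τ'.1 x → x ∈ Λ ∧ τ.1 x ∈ Λ ∧ τ'.1 x ∈ Λ) →
    μ {σ : Omega | ∀ x ∈ Λ, σ.1 x = τ.1 x} = μ {σ : Omega | ∀ x ∈ Λ, σ.1 x = τ'.1 x}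

/-- A (uniform) Gibbs measure. -/
def IsGibbs (μ : Measure Omega) : Prop :=
  Invariant μ ∧ ∀ Λ : Finset V, GibbsCond μ Λ

/-!
Fix signs `aᵢ = ± 1` with `aᵢ sᵢ ≥ 0` and the height `h(x) = ∑ aᵢ xᵢ`; every dimer of the
tilings we construct joins two consecutive levels of `h`. A point `θ` of the circle `𝕋` decides
that all dimers between the levels `n` and `n + 1` point in the direction `F (θ + n α)`, where
`α = √2` and `F` takes the value `i` with probability `pᵢ = |sᵢ| / ∑ |sⱼ|`. Such dimers split `ℤ³`
into bi-infinite paths, and a second point `ψ` of the circle, together with a set `U` of measure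
`q = (1 + ∑ |sⱼ|) / 2`, chooses one of the two perfect matchings of each path.

Translating a tiling by an even vector amounts to a skew rotation of `(θ, ψ)`, which preserves
Lebesgue measure; ergodicity of irrational rotations, first in the fibres and then on the base,
makes the image measure ergodic. The origin is matched to `+aᵢ ηᵢ` with probability `pᵢ q` and to
`-aᵢ ηᵢ` with probability `pᵢ (1 - q)`, so the mean current is `aᵢ pᵢ (2q - 1) = sᵢ`.
-/

local notation "𝕋" => UnitAddCircle

instance : IsProbabilityMeasure (volume : Measure 𝕋) := ⟨UnitAddCircle.measure_univ⟩

theorem measure_eq_zero_or_one_of_sub_invariant {r : ℝ} (hr : Irrational r) {S : Set 𝕋}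
    (hS : MeasurableSet S) (hinv : (· - (r : 𝕋)) ⁻¹' S = S) : volume S = 0 ∨ volume S = 1 := by
  have hord : addOrderOf (-(r : 𝕋)) = 0 := by
    rw [addOrderOf_neg, ← AddCircle.denseRange_zsmul_iff, AddCircle.denseRange_zsmul_coe_iff]
    simpa using hr
  simp only [sub_eq_add_neg] at hinv
  exact (AddCircle.ergodic_add_right.2 hord).prob_eq_zero_or_one hS hinv

theorem measurePreserving_prod_sub_skew {G : Type*} [AddGroup G] [MeasurableSpace G]
    [MeasurableAdd₂ G] [MeasurableNeg G] (μ : Measure G) [SFinite μ] [μ.IsAddRightInvariant]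
    (c : G) {f : G → G} (hf : Measurable f) :
    MeasurePreserving (fun b : G × G => (b.1 - c, b.2 - f b.1)) (μ.prod μ) (μ.prod μ) :=
  (measurePreserving_sub_right μ c).skew_product (measurable_snd.sub (hf.comp measurable_fst))
    (Eventually.of_forall fun x => (measurePreserving_sub_right μ (f x)).map_eq)

/-- The sections of `B` are invariant under an irrational rotation, so each is null or conull;
the set of conull sections is invariant under another irrational rotation. -/
theorem volume_prod_eq_zero_or_one {B : Set (𝕋 × 𝕋)} (hB : MeasurableSet B) {r r' : ℝ}
    (hr : Irrational r) (hr' : Irrational r')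
    (h_fiber : ∀ θ ψ, (θ, ψ - (r : 𝕋)) ∈ B ↔ (θ, ψ) ∈ B)
    (h_base : ∀ θ, ∃ c : 𝕋, ∀ ψ, (θ - (r' : 𝕋), ψ - c) ∈ B ↔ (θ, ψ) ∈ B) :
    volume B = 0 ∨ volume B = 1 := by
  set g : 𝕋 → ENNReal := fun θ => volume (Prod.mk θ ⁻¹' B)
  have hg : Measurable g := measurable_measure_prodMk_left hB
  have hsec : ∀ θ, g θ = 0 ∨ g θ = 1 := fun θ =>
    measure_eq_zero_or_one_of_sub_invariant hr (measurable_prodMk_left hB)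
      (Set.ext fun ψ => h_fiber θ ψ)
  have hg_rot : ∀ θ, g (θ - r') = g θ := fun θ => by
    obtain ⟨c, hc⟩ := h_base θ
    have : (· - c) ⁻¹' (Prod.mk (θ - r') ⁻¹' B) = Prod.mk θ ⁻¹' B := Set.ext fun ψ => hc ψ
    simp only [g]
    rw [← this, (measurePreserving_sub_right volume c).measure_preimage
      (measurable_prodMk_left hB).nullMeasurableSet]
  set C := g ⁻¹' {1}
  have hC : MeasurableSet C := hg (measurableSet_singleton 1)
  have hg_eq : g = C.indicator 1 := funext fun θ => by
    rcases hsec θ with h | h <;> simp [C, h]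
  rw [Measure.volume_eq_prod, Measure.prod_apply hB]
  change ∫⁻ θ, g θ = 0 ∨ ∫⁻ θ, g θ = 1
  rw [hg_eq, lintegral_indicator_one hC]
  exact measure_eq_zero_or_one_of_sub_invariant hr' hC
    (Set.ext fun θ => by simp only [C, Set.mem_preimage, hg_rot])

noncomputable def angle (θ : 𝕋) : ℝ := AddCircle.equivIoc 1 0 θ

theorem measurable_angle : Measurable angle :=
  measurable_subtype_coe.comp (AddCircle.measurableEquivIoc 1 0).measurable

theorem angle_mem_Ioc (θ : 𝕋) : angle θ ∈ Set.Ioc 0 1 := by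
  simpa [angle] using (AddCircle.equivIoc 1 0 θ).2

theorem angle_coe {x : ℝ} (hx : x ∈ Set.Ioc 0 1) : angle x = x :=
  AddCircle.equivIoc_coe_of_mem (by simpa using hx)

theorem volume_angle_preimage_Ioc {u v : ℝ} (hu : 0 ≤ u) (hv : v ≤ 1) :
    volume (angle ⁻¹' Set.Ioc u v) = ENNReal.ofReal (v - u) := by
  rw [AddCircle.add_projection_respects_measure 1 0 (measurable_angle measurableSet_Ioc),
    zero_add, ← Real.volume_Ioc]
  congr 1
  ext x
  simp only [Set.mem_inter_iff, Set.mem_preimage]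
  constructor
  · rintro ⟨hx, hx01⟩
    rwa [angle_coe hx01] at hx
  · intro hx
    have hx01 : x ∈ Set.Ioc (0 : ℝ) 1 := ⟨hu.trans_lt hx.1, hx.2.trans hv⟩
    exact ⟨by rwa [angle_coe hx01], hx01⟩

theorem exists_measurableSet_volume_eq {q : ℝ} (hq : q ≤ 1) :
    ∃ U : Set 𝕋, MeasurableSet U ∧ volume U = ENNReal.ofReal q :=
  ⟨_, measurable_angle measurableSet_Ioc, by rw [volume_angle_preimage_Ioc le_rfl hq, sub_zero]⟩

theorem exists_measurable_volume_preimage_singleton_eq {p : Fin 3 → ℝ} (hp : ∀ i, 0 ≤ p i)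
    (hp1 : ∑ i, p i = 1) :
    ∃ F : 𝕋 → Fin 3, Measurable F ∧ ∀ i, volume (F ⁻¹' {i}) = ENNReal.ofReal (p i) := by
  classical
  rw [Fin.sum_univ_three] at hp1
  have h0 := hp 0; have h1 := hp 1; have h2 := hp 2
  set F : 𝕋 → Fin 3 := fun θ => if angle θ ≤ p 0 then 0 else if angle θ ≤ p 0 + p 1 then 1 else 2
  have hF : Measurable F := Measurable.ite (measurable_angle measurableSet_Iic) measurable_const <|
      Measurable.ite (measurable_angle measurableSet_Iic) measurable_const measurable_const
  refine ⟨F, hF, fun i => ?_⟩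
  have hfiber : ∀ {i : Fin 3} {u v : ℝ}, (∀ θ, F θ = i ↔ u < angle θ ∧ angle θ ≤ v) →
      F ⁻¹' {i} = angle ⁻¹' Set.Ioc u v := fun h => Set.ext h
  fin_cases i
  · rw [hfiber (u := 0) (v := p 0), volume_angle_preimage_Ioc le_rfl (by linarith), sub_zero]
    · rfl
    · intro θ
      obtain ⟨hpos, hle⟩ := angle_mem_Ioc θ
      simp only [F]
      split_ifs <;> simp <;> (try intro) <;> (try refine ⟨?_, ?_⟩) <;> linarith
  · rw [hfiber (u := p 0) (v := p 0 + p 1), volume_angle_preimage_Ioc h0 (by linarith)]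
    · simp
    · intro θ
      simp only [F]
      split_ifs <;> simp <;> (try intro) <;> (try refine ⟨?_, ?_⟩) <;> linarith
  · rw [hfiber (u := p 0 + p 1) (v := 1), volume_angle_preimage_Ioc (by linarith) le_rfl]
    · congr 1; simp; linarith
    · intro θ
      obtain ⟨hpos, hle⟩ := angle_mem_Ioc θ
      simp only [F]
      split_ifs <;> simp <;> (try intro) <;> (try refine ⟨?_, ?_⟩) <;> linarith

theorem adj_comm {x y : V} (h : Adj x y) : Adj y x :=
  let ⟨i, hi⟩ := h; ⟨i, hi.symm⟩

theorem measurable_translate (v : V) : Measurable (translate v) := by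
  unfold translate
  refine Measurable.subtype_mk (measurable_pi_lambda _ fun x => ?_)
  have h : Measurable fun τ : Omega => τ.1 (x - v) :=
    (measurable_pi_apply (x - v)).comp measurable_subtype_coe
  exact h.add_const v

theorem measurableSet_setOf_apply_zero_eq (y : V) : MeasurableSet {τ : Omega | τ.1 0 = y} := by
  have h : Measurable fun τ : Omega => τ.1 0 := (measurable_pi_apply 0).comp measurable_subtype_coe
  exact h (measurableSet_singleton y)

noncomputable section Construction

variable (a : Fin 3 → ℤˣ) (F : 𝕋 → Fin 3) (α : 𝕋) (U : Set 𝕋)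

def height : V →+ ℤ where
  toFun x := ∑ i, (a i : ℤ) * x i
  map_zero' := by simp
  map_add' x y := by simp [mul_add, Finset.sum_add_distrib]

def step (i : Fin 3) : V := (a i : ℤ) • unitVec i

def levelDir (θ : 𝕋) (n : ℤ) : Fin 3 := F (θ + n • α)

def pathOffset (θ : 𝕋) (n : ℤ) : V :=
  ∑ m ∈ Finset.Ico 0 n, step a (levelDir F α θ m) - ∑ m ∈ Finset.Ico n 0, step a (levelDir F α θ m)

/-- `x - pathOffset a F α θ (height a x)` is the point where the path through `x` crosses level
`0`, so the label is constant along each path. -/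
def pathLabel (θ : 𝕋) (x : V) : ℤ := a 0 * (x 0 - pathOffset a F α θ (height a x) 0)

open Classical in
def partner (θ ψ : 𝕋) (x : V) : V :=
  if (Even (height a x) ↔ ψ + pathLabel a F α θ x • α ∈ U) then
    x + step a (levelDir F α θ (height a x))
  else x - step a (levelDir F α θ (height a x - 1))

def labelShift (v : V) (θ : 𝕋) : ℤ := a 0 * (v 0 + pathOffset a F α θ (-height a v) 0)

def skewShift (v : V) (b : 𝕋 × 𝕋) : 𝕋 × 𝕋 :=
  (b.1 - height a v • α, b.2 - labelShift a F α v b.1 • α)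

variable {a F α U}

theorem height_eq (x : V) : height a x = ∑ i, (a i : ℤ) * x i := rfl

theorem step_apply (i j : Fin 3) : step a i j = if j = i then (a i : ℤ) else 0 := by
  simp [step, unitVec]

theorem height_step (i : Fin 3) : height a (step a i) = 1 := by
  simp [height, step, unitVec, Finset.sum_ite_eq', ← Units.val_mul]

theorem even_height_iff_isEven (v : V) : Even (height a v) ↔ IsEven v := by
  have hodd : ∀ i, ¬Even (a i : ℤ) := fun i => by
    rcases Int.units_eq_one_or (a i) with h | h <;> simp [h]
  rw [IsEven, ← Int.even_iff, height_eq, Fin.sum_univ_three]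
  simp [Int.even_add, Int.even_mul, hodd]

theorem adj_add_step (x : V) (i : Fin 3) : Adj x (x + step a i) := by
  rcases Int.units_eq_one_or (a i) with h | h
  · exact ⟨i, Or.inl (by simp [step, h])⟩
  · exact ⟨i, Or.inr (by simp [step, h])⟩

theorem adj_sub_step (x : V) (i : Fin 3) : Adj x (x - step a i) :=
  adj_comm (by simpa using adj_add_step (a := a) (x - step a i) i)

theorem step_ne_neg_step (i j : Fin 3) : step a i ≠ -step a j := fun h => by
  simpa [height_step] using congrArg (height a) h

theorem step_injective : Function.Injective (step a) := fun i j h => by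
  by_contra hij
  simpa [step_apply, hij] using congrFun h i

theorem pathOffset_zero (θ : 𝕋) : pathOffset a F α θ 0 = 0 := by simp [pathOffset]

theorem pathOffset_add_one (θ : 𝕋) (n : ℤ) :
    pathOffset a F α θ (n + 1) = pathOffset a F α θ n + step a (levelDir F α θ n) := by
  rcases le_or_gt 0 n with hn | hn
  · rw [pathOffset, pathOffset, ← Finset.insert_Ico_right_eq_Ico_add_one hn,
      Finset.sum_insert Finset.right_notMem_Ico,
      Finset.Ico_eq_empty_of_le (show (0 : ℤ) ≤ n + 1 by omega), Finset.Ico_eq_empty_of_le hn]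
    abel
  · rw [pathOffset, pathOffset, ← Finset.insert_Ico_add_one_left_eq_Ico hn,
      Finset.sum_insert (by simp), Finset.Ico_eq_empty_of_le (show n + 1 ≤ 0 by omega),
      Finset.Ico_eq_empty_of_le hn.le]
    abel

theorem pathOffset_sub_one (θ : 𝕋) (n : ℤ) :
    pathOffset a F α θ (n - 1) = pathOffset a F α θ n - step a (levelDir F α θ (n - 1)) := by
  rw [eq_sub_iff_add_eq, ← pathOffset_add_one, sub_add_cancel]

theorem levelDir_sub_zsmul (θ : 𝕋) (t m : ℤ) :
    levelDir F α (θ - t • α) m = levelDir F α θ (m - t) := by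
  rw [levelDir, levelDir, sub_zsmul]
  abel_nf

theorem pathOffset_sub_zsmul (θ : 𝕋) (t n : ℤ) :
    pathOffset a F α (θ - t • α) n = pathOffset a F α θ (n - t) - pathOffset a F α θ (-t) := by
  induction n using Int.induction_on with
  | zero => rw [pathOffset_zero, zero_sub, sub_self]
  | succ k ih =>
    rw [pathOffset_add_one, ih, levelDir_sub_zsmul, add_sub_right_comm, pathOffset_add_one]
    abel
  | pred k ih =>
    rw [pathOffset_sub_one, ih, levelDir_sub_zsmul, sub_right_comm _ (1 : ℤ), pathOffset_sub_one]
    abel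

theorem pathLabel_add_step (θ : 𝕋) (x : V) :
    pathLabel a F α θ (x + step a (levelDir F α θ (height a x))) = pathLabel a F α θ x := by
  simp only [pathLabel, map_add, height_step, pathOffset_add_one, Pi.add_apply]
  ring

theorem pathLabel_zero (θ : 𝕋) : pathLabel a F α θ 0 = 0 := by
  simp [pathLabel, pathOffset_zero]

theorem pathLabel_sub_zsmul (v : V) (θ : 𝕋) (x : V) :
    pathLabel a F α (θ - height a v • α) x =
      pathLabel a F α θ (x - v) + labelShift a F α v θ := by
  simp only [pathLabel, labelShift, pathOffset_sub_zsmul, map_sub, Pi.sub_apply]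
  ring

theorem partner_of_iff {θ ψ : 𝕋} {x : V}
    (h : Even (height a x) ↔ ψ + pathLabel a F α θ x • α ∈ U) :
    partner a F α U θ ψ x = x + step a (levelDir F α θ (height a x)) := by
  classical
  exact if_pos h

theorem partner_of_not_iff {θ ψ : 𝕋} {x : V}
    (h : ¬(Even (height a x) ↔ ψ + pathLabel a F α θ x • α ∈ U)) :
    partner a F α U θ ψ x = x - step a (levelDir F α θ (height a x - 1)) := by
  classical
  exact if_neg h

theorem isTiling_partner (θ ψ : 𝕋) : IsTiling (partner a F α U θ ψ) := by
  refine ⟨fun x => ?_, fun x => ?_⟩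
  · by_cases hx : Even (height a x) ↔ ψ + pathLabel a F α θ x • α ∈ U
    · rw [partner_of_iff hx]; exact adj_add_step x _
    · rw [partner_of_not_iff hx]; exact adj_sub_step x _
  · by_cases hx : Even (height a x) ↔ ψ + pathLabel a F α θ x • α ∈ U
    · set y := x + step a (levelDir F α θ (height a x))
      have hy : height a y = height a x + 1 := by simp [y, height_step]
      have hy' : ¬(Even (height a y) ↔ ψ + pathLabel a F α θ y • α ∈ U) := by
        rw [hy, pathLabel_add_step, Int.even_add_one, hx]
        exact not_iff_self
      rw [partner_of_iff hx, partner_of_not_iff hy', hy, add_sub_cancel_right, add_sub_cancel_right]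
    · set y := x - step a (levelDir F α θ (height a x - 1))
      have hy : height a y = height a x - 1 := by simp [y, height_step]
      have hxy : x = y + step a (levelDir F α θ (height a y)) := by simp [y, hy]
      have hy' : Even (height a y) ↔ ψ + pathLabel a F α θ y • α ∈ U := by
        rw [hy, Int.even_sub_one, ← pathLabel_add_step, ← hxy]
        tauto
      rw [partner_of_not_iff hx, partner_of_iff hy', hy, sub_add_cancel]

theorem partner_translate {v : V} (hv : IsEven v) (θ ψ : 𝕋) (x : V) :
    partner a F α U (θ - height a v • α) (ψ - labelShift a F α v θ • α) x =
      partner a F α U θ ψ (x - v) + v := by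
  have hx : height a x = height a (x - v) + height a v := by simp
  have hpar : Even (height a x) ↔ Even (height a (x - v)) := by
    rw [hx, Int.even_add, iff_true_right ((even_height_iff_isEven v).2 hv)]
  have harg : ψ - labelShift a F α v θ • α + pathLabel a F α (θ - height a v • α) x • α =
      ψ + pathLabel a F α θ (x - v) • α := by
    rw [pathLabel_sub_zsmul, add_zsmul]
    abel
  by_cases h : Even (height a (x - v)) ↔ ψ + pathLabel a F α θ (x - v) • α ∈ U
  · rw [partner_of_iff (by rwa [hpar, harg]), partner_of_iff h, levelDir_sub_zsmul, hx]
    abel_nf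
  · rw [partner_of_not_iff (by rwa [hpar, harg]), partner_of_not_iff h, levelDir_sub_zsmul, hx]
    abel_nf

theorem partner_zero_of_mem {θ ψ : 𝕋} (hψ : ψ ∈ U) : partner a F α U θ ψ 0 = step a (F θ) := by
  rw [partner_of_iff (by simpa [pathLabel_zero] using hψ)]
  simp [levelDir]

theorem partner_zero_of_notMem {θ ψ : 𝕋} (hψ : ψ ∉ U) :
    partner a F α U θ ψ 0 = -step a (F (θ - α)) := by
  rw [partner_of_not_iff (by simpa [pathLabel_zero] using hψ)]
  simp [levelDir, sub_eq_add_neg]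

variable (a F α U) in
def tilingOf (b : 𝕋 × 𝕋) : Omega := ⟨partner a F α U b.1 b.2, isTiling_partner b.1 b.2⟩

theorem translate_tilingOf {v : V} (hv : IsEven v) (b : 𝕋 × 𝕋) :
    translate v (tilingOf a F α U b) = tilingOf a F α U (skewShift a F α v b) :=
  Subtype.ext <| funext fun x => (partner_translate hv b.1 b.2 x).symm

theorem meanCurrent_apply_eq (μ : Measure Omega) (i : Fin 3) :
    meanCurrent μ i =
      a i * ((μ {τ | τ.1 0 = step a i}).toReal - (μ {τ | τ.1 0 = -step a i}).toReal) := by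
  rcases Int.units_eq_one_or (a i) with h | h <;> simp [meanCurrent, step, h]

variable (hF : Measurable F)
include hF

theorem measurable_levelDir (n : ℤ) : Measurable fun θ => levelDir F α θ n :=
  hF.comp (measurable_add_const _)

theorem measurable_pathOffset (n : ℤ) : Measurable fun θ => pathOffset a F α θ n := by
  have h : ∀ m : ℤ, Measurable fun θ => step a (levelDir F α θ m) := fun m =>
    (measurable_of_countable (step a)).comp (measurable_levelDir hF m)
  exact (Finset.measurable_sum _ fun m _ => h m).sub (Finset.measurable_sum _ fun m _ => h m)

theorem measurable_pathLabel (x : V) : Measurable fun θ => pathLabel a F α θ x :=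
  measurable_const.mul <| measurable_const.sub <|
    (measurable_pi_apply 0).comp (measurable_pathOffset hF _)

theorem measurable_labelShift (v : V) : Measurable (labelShift a F α v) :=
  measurable_const.mul <| measurable_const.add <|
    (measurable_pi_apply 0).comp (measurable_pathOffset hF _)

theorem measurePreserving_skewShift (v : V) :
    MeasurePreserving (skewShift a F α v) volume volume := by
  rw [Measure.volume_eq_prod]
  exact measurePreserving_prod_sub_skew volume _
    ((measurable_of_countable (· • α)).comp (measurable_labelShift hF v))

variable (hU : MeasurableSet U)
include hU

theorem measurable_tilingOf : Measurable (tilingOf a F α U) := by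
  classical
  refine Measurable.subtype_mk (measurable_pi_lambda _ fun x => ?_)
  have hmem : Measurable fun b : 𝕋 × 𝕋 => b.2 + pathLabel a F α b.1 x • α ∈ U :=
    measurableSet_setOfPred.1 <| hU.preimage <| measurable_snd.add <|
      (measurable_of_countable (· • α)).comp ((measurable_pathLabel hF x).comp measurable_fst)
  exact Measurable.ite (measurable_const.iff hmem).setOf
    ((measurable_of_countable fun i => x + step a i).comp
      ((measurable_levelDir hF _).comp measurable_fst))
    ((measurable_of_countable fun i => x - step a i).comp
      ((measurable_levelDir hF _).comp measurable_fst))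

theorem invariant_map_tilingOf : Invariant (volume.map (tilingOf a F α U)) := by
  intro v hv
  have hT := measurable_tilingOf (a := a) (α := α) hF hU
  have hS := measurePreserving_skewShift (a := a) (α := α) hF v
  have hcomm : translate v ∘ tilingOf a F α U = tilingOf a F α U ∘ skewShift a F α v :=
    funext (translate_tilingOf hv)
  rw [Measure.map_map (measurable_translate v) hT, hcomm, ← Measure.map_map hT hS.measurable,
    hS.map_eq]

theorem isErgodicMeasure_map_tilingOf {r : ℝ} (hr : Irrational r) :
    IsErgodicMeasure (volume.map (tilingOf a F r U)) := by
  refine ⟨invariant_map_tilingOf hF hU, fun A hA hinv => ?_⟩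
  have hT := measurable_tilingOf (a := a) (α := r) hF hU
  have hshift : ∀ v, IsEven v → ∀ θ ψ,
      (θ - height a v • (r : 𝕋), ψ - labelShift a F r v θ • (r : 𝕋)) ∈ tilingOf a F r U ⁻¹' A ↔
        (θ, ψ) ∈ tilingOf a F r U ⁻¹' A := fun v hv θ ψ => by
    change tilingOf a F r U (skewShift a F r v (θ, ψ)) ∈ A ↔ _
    rw [← translate_tilingOf hv, ← Set.mem_preimage (f := translate v), hinv v hv]
    rfl
  rw [Measure.map_apply hT hA]
  refine volume_prod_eq_zero_or_one (hT hA) hr (hr.natCast_mul two_ne_zero) (fun θ ψ => ?_)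
    (fun θ => ⟨labelShift a F r (step a 0 + step a 0) θ • (r : 𝕋), fun ψ => ?_⟩)
  -- `step a 0 - step a 2` has height `0` and moves the labels by one: it rotates `ψ` alone.
  · have hv : IsEven (step a 0 - step a 2) := by
      rw [← even_height_iff_isEven (a := a)]; simp [height_step]
    convert hshift _ hv θ ψ using 3
    · simp [height_step]
    · simp [labelShift, height_step, pathOffset_zero, step_apply, ← Units.val_mul]
  · have hv : IsEven (step a 0 + step a 0) := by
      rw [← even_height_iff_isEven (a := a)]; simp [height_step]
    convert hshift _ hv θ ψ using 3
    simp [height_step, two_mul, two_zsmul]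

theorem map_tilingOf_apply_step (i : Fin 3) :
    volume.map (tilingOf a F α U) {τ | τ.1 0 = step a i} = volume (F ⁻¹' {i}) * volume U := by
  have hpre : tilingOf a F α U ⁻¹' {τ | τ.1 0 = step a i} = (F ⁻¹' {i}) ×ˢ U := by
    ext ⟨θ, ψ⟩
    by_cases hψ : ψ ∈ U
    · simp [tilingOf, partner_zero_of_mem, hψ, step_injective.eq_iff]
    · simp [tilingOf, partner_zero_of_notMem, hψ, (step_ne_neg_step _ _).symm]
  rw [Measure.map_apply (measurable_tilingOf hF hU) (measurableSet_setOf_apply_zero_eq _), hpre,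
    Measure.volume_eq_prod, Measure.prod_prod]

theorem map_tilingOf_apply_neg_step (i : Fin 3) :
    volume.map (tilingOf a F α U) {τ | τ.1 0 = -step a i} = volume (F ⁻¹' {i}) * volume Uᶜ := by
  have hpre : tilingOf a F α U ⁻¹' {τ | τ.1 0 = -step a i} =
      ((· - α) ⁻¹' (F ⁻¹' {i})) ×ˢ Uᶜ := by
    ext ⟨θ, ψ⟩
    by_cases hψ : ψ ∈ U
    · simp [tilingOf, partner_zero_of_mem, hψ, step_ne_neg_step]
    · simp [tilingOf, partner_zero_of_notMem, hψ, step_injective.eq_iff]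
  rw [Measure.map_apply (measurable_tilingOf hF hU) (measurableSet_setOf_apply_zero_eq _), hpre,
    Measure.volume_eq_prod, Measure.prod_prod,
    (measurePreserving_sub_right volume α).measure_preimage
      (hF (measurableSet_singleton i)).nullMeasurableSet]

theorem meanCurrent_map_tilingOf (i : Fin 3) :
    meanCurrent (volume.map (tilingOf a F α U)) i =
      a i * (volume (F ⁻¹' {i})).toReal * (2 * (volume U).toReal - 1) := by
  rw [meanCurrent_apply_eq, map_tilingOf_apply_step hF hU, map_tilingOf_apply_neg_step hF hU,
    prob_compl_eq_one_sub hU, ENNReal.toReal_mul, ENNReal.toReal_mul,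
    ENNReal.toReal_sub_of_le prob_le_one ENNReal.one_ne_top, ENNReal.toReal_one]
  ring

end Construction
theorem exists_signs_weights_of_mem_Oct {s : Fin 3 → ℝ} (hs : s ∈ Oct) :
    ∃ (a : Fin 3 → ℤˣ) (p : Fin 3 → ℝ) (q : ℝ), (∀ i, 0 ≤ p i) ∧ ∑ i, p i = 1 ∧
      0 ≤ q ∧ q ≤ 1 ∧ ∀ i, s i = a i * p i * (2 * q - 1) := by
  set t := |s 0| + |s 1| + |s 2| with ht
  have ht1 : t ≤ 1 := hs
  have hst : ∀ i, |s i| ≤ t := by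
    have := abs_nonneg (s 0); have := abs_nonneg (s 1); have := abs_nonneg (s 2)
    intro i; fin_cases i <;> simp [ht] <;> linarith
  have hsign : ∀ i, s i = ((if 0 ≤ s i then 1 else -1 : ℤˣ) : ℤ) * |s i| := fun i => by
    split_ifs with h
    · simp [abs_of_nonneg h]
    · simp [abs_of_neg (not_le.1 h)]
  refine ⟨fun i => if 0 ≤ s i then 1 else -1, fun i => if t = 0 then 1 / 3 else |s i| / t,
    (1 + t) / 2, fun i => by split_ifs <;> positivity, ?_, by positivity, by linarith, fun i => ?_⟩
  · split_ifs with h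
    · norm_num
    · rw [Fin.sum_univ_three]; field_simp; exact ht.symm
  · rw [show 2 * ((1 + t) / 2) - 1 = t by ring]
    split_ifs with h0
    · simpa [h0] using abs_nonpos_iff.1 (h0 ▸ hst i)
    · dsimp only
      rw [mul_assoc, div_mul_cancel₀ _ h0]
      exact hsign i

/-- **Existence of ergodic measures of every mean current.** For every `s` in the
octahedron `O` there exists an invariant, ergodic Borel probability measure on the space of
dimer tilings of `ℤ³` with mean current `s`. -/
theorem statement6 (s : Fin 3 → ℝ) (hs : s ∈ Oct) :
    ∃ μ : Measure Omega, IsProbabilityMeasure μ ∧ IsErgodicMeasure μ ∧ meanCurrent μ = s := by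
  obtain ⟨a, p, q, hp, hp1, hq0, hq1, hs_eq⟩ := exists_signs_weights_of_mem_Oct hs
  obtain ⟨F, hF, hFp⟩ := exists_measurable_volume_preimage_singleton_eq hp hp1
  obtain ⟨U, hU, hUq⟩ := exists_measurableSet_volume_eq hq1
  refine ⟨volume.map (tilingOf a F (√2 : ℝ) U),
    Measure.isProbabilityMeasure_map (measurable_tilingOf hF hU).aemeasurable,
    isErgodicMeasure_map_tilingOf hF hU irrational_sqrt_two, funext fun i => ?_⟩
  rw [meanCurrent_map_tilingOf hF hU, hFp, hUq, ENNReal.toReal_ofReal (hp i),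
    ENNReal.toReal_ofReal hq0, hs_eq]

end Dimers
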